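/- arXiv:2301.00309 — 6 statements merged into one kernel-verified Lean document; each statement's English description precedes it below -/
import Mathlib

section
/- Let n and p be positive integers, and let s^(p)_n denote the number of p-extended peak subsets of [n-1] (with the convention s^(p)_0 = 0). Then s^(p)_n = 2^{n-1} whenever 1 ≤ n ≤ p, and s^(p)_n = Σ_{k=1}^{p+1} s^(p)_{n-k} whenever n > p. -/
open Finset
open scoped Classical

namespace ExtPeaks

/-- `fget g j` is the `j`-th entry (1-indexed) of the sequence `g : Fin n → ℕ`,
so `fget g j = g ⟨j - 1, _⟩` for `1 ≤ j ≤ n`. -/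
def fget {n : ℕ} (g : Fin n → ℕ) (j : ℕ) : ℕ :=
  if h : j - 1 < n then g ⟨j - 1, h⟩ else 0

/-- `Peak(I) = {i ∈ I : i ≥ 2 and i - 1 ∉ I}`. -/
def peakOf (I : Finset ℕ) : Finset ℕ :=
  I.filter fun i => 2 ≤ i ∧ i - 1 ∉ I

/-- The monomial `x_{i_1} ⋯ x_{i_n}` attached to a sequence `g`, as a `Finsupp`. -/
noncomputable def monomialOf {n : ℕ} (g : Fin n → ℕ) : ℕ →₀ ℕ :=
  ∑ j, Finsupp.single (g j) 1

/-- The (finitely many) weakly increasing sequences of positive integers of length `n`,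
satisfying the peak condition `i_{j-1} < i_{j+1}` for `j ∈ Peak(I)`, with monomial `d`. -/
noncomputable def Lseqs (n : ℕ) (I : Finset ℕ) (d : ℕ →₀ ℕ) : Finset (Fin n → ℕ) :=
  (Fintype.piFinset fun _ => d.support).filter fun g =>
    (∀ j k : Fin n, j ≤ k → g j ≤ g k) ∧ (∀ j, 1 ≤ g j) ∧
    (∀ j ∈ peakOf I, fget g (j - 1) < fget g (j + 1)) ∧ monomialOf g = d

/-- The `q`-fundamental quasisymmetric function `L^{(q)}_{n,I}`, as a formal power
series in the variables `x_1, x_2, …` (defined coefficientwise). -/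
noncomputable def Lq (q : ℂ) (n : ℕ) (I : Finset ℕ) : MvPowerSeries ℕ ℂ :=
  fun d => ∑ g ∈ Lseqs n I d,
    q ^ (I.filter fun j => fget g j = fget g (j + 1)).card *
      (q + 1) ^ (Finset.image g Finset.univ).card

/-- The weakly increasing sequences of positive integers of length `s` with
`i_j = i_{j+1}` for all `j ∈ I`, with monomial `d`. -/
noncomputable def etaSeqs (s : ℕ) (I : Finset ℕ) (d : ℕ →₀ ℕ) : Finset (Fin s → ℕ) :=
  (Fintype.piFinset fun _ => d.support).filter fun g =>
    (∀ j k : Fin s, j ≤ k → g j ≤ g k) ∧ (∀ j, 1 ≤ g j) ∧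
    (∀ j ∈ I, fget g j = fget g (j + 1)) ∧ monomialOf g = d

/-- The enriched `q`-monomial quasisymmetric function `η^{(q)}_{s,I}`. -/
noncomputable def etaq (q : ℂ) (s : ℕ) (I : Finset ℕ) : MvPowerSeries ℕ ℂ :=
  fun d => ∑ g ∈ etaSeqs s I d, (q + 1) ^ (Finset.image g Finset.univ).card

/-- `I` is a `p`-extended peak set: `I ∪ {0}` contains no `p + 1` consecutive integers. -/
def IsExtPeakSet (p : ℕ) (I : Finset ℕ) : Prop :=
  ∀ a : ℕ, ¬ Finset.Icc a (a + p) ⊆ insert 0 I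

/-- `s^{(p)}_n`: the number of `p`-extended peak subsets of `[n-1]`, with `s^{(p)}_0 = 0`. -/
noncomputable def sCount (p n : ℕ) : ℕ :=
  if n = 0 then 0
  else ((Finset.Icc 1 (n - 1)).powerset.filter fun I => IsExtPeakSet p I).card

/-- The value `π(j)` of the permutation at the (1-indexed) position `j`,
as an element of `{1, …, n}`. -/
def pval {n : ℕ} (π : Equiv.Perm (Fin n)) (j : ℕ) : ℕ :=
  if h : j - 1 < n then (π ⟨j - 1, h⟩ : ℕ) + 1 else 0

/-- The descent set `Des(π) = {1 ≤ i ≤ n-1 : π(i) > π(i+1)}`. -/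
def desSet {n : ℕ} (π : Equiv.Perm (Fin n)) : Finset ℕ :=
  (Finset.Icc 1 (n - 1)).filter fun i => pval π (i + 1) < pval π i

/-- The peak set `Peak(π) = {2 ≤ i ≤ n-1 : π(i-1) < π(i) > π(i+1)}`. -/
def peakSet {n : ℕ} (π : Equiv.Perm (Fin n)) : Finset ℕ :=
  (Finset.Icc 2 (n - 1)).filter fun i =>
    pval π (i - 1) < pval π i ∧ pval π (i + 1) < pval π i

/-- The `p`-extended peak set `Peak_p(π)` of a permutation: the descents `i` such that
`i ≤ p - 1` or some position `i - j` (with `1 ≤ j ≤ p` and `i - j ≥ 1`) is not a descent. -/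
def peakP {n : ℕ} (p : ℕ) (π : Equiv.Perm (Fin n)) : Finset ℕ :=
  (desSet π).filter fun i =>
    i ≤ p - 1 ∨ ∃ j ∈ Finset.Icc 1 p, 1 ≤ i - j ∧ i - j ∉ desSet π

/-- `ρ_p = exp(-iπ(p-1)/(p+1))`. -/
noncomputable def rho (p : ℕ) : ℂ :=
  Complex.exp (-((Real.pi : ℂ) * ((p : ℂ) - 1) / ((p : ℂ) + 1)) * Complex.I)

/-- `[m]_c = 1 + c + ⋯ + c^(m-1)`. -/
noncomputable def qint (m : ℕ) (c : ℂ) : ℂ := ∑ j ∈ Finset.range m, c ^ j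

/-- The entry of the transition matrix `B^{(q)}` at row `J`, column `I`:
`Σ (-q)^{|K|} (q-1)^{|J'|}` over pairs `(J', K)` with `J' ⊆ I`, `K ⊆ Peak(I)`,
`J' ∩ K = ∅` and `J' ∪ (K-1) ∪ K = J`. -/
noncomputable def Bentry (q : ℂ) (J I : Finset ℕ) : ℂ :=
  ∑ J' ∈ I.powerset, ∑ K ∈ (peakOf I).powerset,
    if Disjoint J' K ∧ J' ∪ K.image (· - 1) ∪ K = J then
      (-q) ^ K.card * (q - 1) ^ J'.card
    else 0

/-- The collection of all subsets of `[n-1]` (the empty collection when `n = 0`,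
so that `B_0` is the empty matrix). -/
def subsetsOf (n : ℕ) : Finset (Finset ℕ) :=
  if n = 0 then ∅ else (Finset.Icc 1 (n - 1)).powerset

/-- The matrix `B_n^{(q)}`, with rows and columns indexed by the subsets of `[n-1]`. -/
noncomputable def Bmat (q : ℂ) (n : ℕ) : Matrix ↥(subsetsOf n) ↥(subsetsOf n) ℂ :=
  fun J I => Bentry q J.1 I.1

/-- The entry of `A_n^{(q)}` at row `J'`, column `I'`, namely
`B_n^{(q)}(J' ∪ {n-1}, I' ∪ {n-1})`. -/
noncomputable def Aentry (q : ℂ) (n : ℕ) (J I : Finset ℕ) : ℂ :=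
  Bentry q (insert (n - 1) J) (insert (n - 1) I)

/-- The matrix `A_n^{(q)}`, with rows and columns indexed by the subsets of `[n-2]`. -/
noncomputable def Amat (q : ℂ) (n : ℕ) :
    Matrix ↥(subsetsOf (n - 1)) ↥(subsetsOf (n - 1)) ℂ :=
  fun J I => Aentry q n J.1 I.1

/-- The dimension of the kernel of (the linear map associated with) `B_n^{(q)}`. -/
noncomputable def dimKer (q : ℂ) (n : ℕ) : ℕ :=
  Module.finrank ℂ (LinearMap.ker (Matrix.mulVecLin (Bmat q n)))

lemma extPeak_anti {p : ℕ} {I J : Finset ℕ} (h : I ⊆ J) (hJ : IsExtPeakSet p J) :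
    IsExtPeakSet p I :=
  fun a ha => hJ a (ha.trans (Finset.insert_subset_insert 0 h))

/-- The number `s^{(p)}_n` of `p`-extended peak subsets of `[n-1]`
equals `2^(n-1)` for `1 ≤ n ≤ p`, and satisfies the recurrence
`s^{(p)}_n = Σ_{k=1}^{p+1} s^{(p)}_{n-k}` for `n > p`. -/
theorem count_extended_peak_sets (n p : ℕ) (hn : 1 ≤ n) (hp : 1 ≤ p) :
    (n ≤ p → sCount p n = 2 ^ (n - 1)) ∧
    (p < n → sCount p n = ∑ k ∈ Finset.Icc 1 (p + 1), sCount p (n - k)) := by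
  constructor
  · intro hnp
    rw [sCount, if_neg (by omega), Finset.filter_true_of_mem, Finset.card_powerset,
      Nat.card_Icc]
    · rfl
    · intro I hI a ha
      rw [Finset.mem_powerset] at hI
      have h1 : a + p ∈ insert 0 I := ha (Finset.mem_Icc.2 ⟨Nat.le_add_right a p, le_rfl⟩)
      rcases Finset.mem_insert.1 h1 with h | h
      · omega
      · have := Finset.mem_Icc.1 (hI h); omega
  · intro hpn
    classical
    set S : Finset (Finset ℕ) :=
      (Finset.Icc 1 (n - 1)).powerset.filter (fun I => IsExtPeakSet p I) with hSdef
    set φ : Finset ℕ → ℕ := fun I => n - (Finset.range n \ I).sup id with hφdef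
    have key : ∀ I : Finset ℕ, I ⊆ Finset.Icc 1 (n - 1) → IsExtPeakSet p I →
        ∃ m : ℕ, (Finset.range n \ I).sup id = m ∧ m ∉ I ∧ 1 ≤ m ∧ m < n ∧
          n - p - 1 ≤ m ∧ (∀ i, m < i → i < n → i ∈ I) := by
      intro I hI hvI
      set m := (Finset.range n \ I).sup id with hm
      have h0 : (0 : ℕ) ∈ Finset.range n \ I := by
        rw [Finset.mem_sdiff, Finset.mem_range]
        refine ⟨by omega, fun h0I => ?_⟩
        have := Finset.mem_Icc.1 (hI h0I); omega
      obtain ⟨b, hb, hbe⟩ := Finset.exists_mem_eq_sup _ ⟨0, h0⟩ id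
      have hbmem := Finset.mem_sdiff.1 hb
      have hfill : ∀ i, m < i → i < n → i ∈ I := by
        intro i h1 h2
        by_contra hc
        have : i ≤ m :=
          Finset.le_sup (f := id) (Finset.mem_sdiff.2 ⟨Finset.mem_range.2 h2, hc⟩)
        omega
      have hmI : m ∉ I := by rw [hm, hbe]; exact hbmem.2
      have hmn : m < n := by rw [hm, hbe]; exact Finset.mem_range.1 hbmem.1
      have hm1 : 1 ≤ m := by
        by_contra hc
        push_neg at hc
        apply hvI 0
        intro x hx
        rcases Finset.mem_Icc.1 hx with ⟨_, hx2⟩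
        rcases Nat.eq_zero_or_pos x with h | h
        · simp [h]
        · exact Finset.mem_insert_of_mem (hfill x (by omega) (by omega))
      have hmp : n - p - 1 ≤ m := by
        by_contra hc
        push_neg at hc
        apply hvI (m + 1)
        intro x hx
        rcases Finset.mem_Icc.1 hx with ⟨hx1, hx2⟩
        exact Finset.mem_insert_of_mem (hfill x (by omega) (by omega))
      exact ⟨m, rfl, hmI, hm1, hmn, hmp, hfill⟩
    have hmemφ : ∀ I ∈ S, φ I ∈ Finset.Icc 1 (p + 1) := by
      intro I hI
      rw [hSdef, Finset.mem_filter, Finset.mem_powerset] at hI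
      obtain ⟨m, hsup, _, hm1, hmn, hmp, _⟩ := key I hI.1 hI.2
      simp only [hφdef]
      rw [hsup]
      exact Finset.mem_Icc.2 ⟨by omega, by omega⟩
    rw [show sCount p n = S.card from by rw [sCount, if_neg (by omega)]]
    rw [Finset.card_eq_sum_card_fiberwise hmemφ]
    apply Finset.sum_congr rfl
    intro k hk
    rcases Finset.mem_Icc.1 hk with ⟨hk1, hk2⟩
    by_cases hkn : k = n
    · have hempty : S.filter (fun I => φ I = k) = ∅ := by
        apply Finset.filter_false_of_mem
        intro I hI
        rw [hSdef, Finset.mem_filter, Finset.mem_powerset] at hI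
        obtain ⟨m, hsup, _, hm1, hmn, _, _⟩ := key I hI.1 hI.2
        simp only [hφdef]
        rw [hsup]
        omega
      rw [hempty, sCount, if_pos (by omega)]
      simp
    · have hkn' : k < n := by omega
      rw [sCount, if_neg (by omega)]
      have hfib : ∀ I : Finset ℕ, I ∈ S.filter (fun I => φ I = k) ↔
          (I ⊆ Finset.Icc 1 (n - 1) ∧ IsExtPeakSet p I ∧ (n - k) ∉ I ∧
           ∀ i, n - k < i → i < n → i ∈ I) := by
        intro I
        rw [Finset.mem_filter, hSdef, Finset.mem_filter, Finset.mem_powerset]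
        constructor
        · rintro ⟨⟨h1, h2⟩, h3⟩
          obtain ⟨m, hsup, hmI, hm1, hmn, hmp, hfill⟩ := key I h1 h2
          simp only [hφdef] at h3
          rw [hsup] at h3
          have hmk : m = n - k := by omega
          exact ⟨h1, h2, hmk ▸ hmI, fun i hi1 hi2 => hfill i (by omega) hi2⟩
        · rintro ⟨h1, h2, h3, h4⟩
          obtain ⟨m, hsup, hmI, hm1, hmn, hmp, hfill⟩ := key I h1 h2
          have hne1 : ¬ m < n - k := fun h => h3 (hfill (n - k) h (by omega))
          have hne2 : ¬ n - k < m := fun h => hmI (h4 m h hmn)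
          refine ⟨⟨h1, h2⟩, ?_⟩
          simp only [hφdef]
          rw [hsup]
          omega
      apply Finset.card_bij' (i := fun I _ => I.filter (· < n - k))
        (j := fun J _ => J ∪ Finset.Icc (n - k + 1) (n - 1))
      · -- i maps into target
        intro I hI
        rw [hfib] at hI
        obtain ⟨h1, h2, h3, h4⟩ := hI
        rw [Finset.mem_filter, Finset.mem_powerset]
        constructor
        · intro x hx
          rw [Finset.mem_filter] at hx
          have := Finset.mem_Icc.1 (h1 hx.1)
          exact Finset.mem_Icc.2 ⟨this.1, by omega⟩
        · exact extPeak_anti (Finset.filter_subset _ _) h2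
      · -- j maps into fiber
        intro J hJ
        rw [Finset.mem_filter, Finset.mem_powerset] at hJ
        obtain ⟨hJ1, hJ2⟩ := hJ
        have hJsmall : ∀ x ∈ J, 1 ≤ x ∧ x ≤ n - k - 1 := fun x hx =>
          Finset.mem_Icc.1 (hJ1 hx)
        have hnk : (n - k) ∉ J ∪ Finset.Icc (n - k + 1) (n - 1) := by
          rw [Finset.mem_union]
          rintro (h | h)
          · have := hJsmall _ h; omega
          · have := Finset.mem_Icc.1 h; omega
        rw [hfib]
        refine ⟨?_, ?_, hnk, ?_⟩
        · intro x hx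
          rcases Finset.mem_union.1 hx with h | h
          · have := hJsmall _ h
            exact Finset.mem_Icc.2 ⟨this.1, by omega⟩
          · have := Finset.mem_Icc.1 h
            exact Finset.mem_Icc.2 ⟨by omega, this.2⟩
        · -- validity of J ∪ Icc
          intro a ha
          have hnk' : (n - k) ∉ insert 0 (J ∪ Finset.Icc (n - k + 1) (n - 1)) := by
            rw [Finset.mem_insert]
            rintro (h | h)
            · omega
            · exact hnk h
          have hsplit : a + p < n - k ∨ n - k < a := by
            by_contra hc
            push_neg at hc
            exact hnk' (ha (Finset.mem_Icc.2 ⟨hc.2, hc.1⟩))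
          rcases hsplit with h | h
          · apply hJ2 a
            intro x hx
            have hx' := Finset.mem_Icc.1 hx
            have := ha hx
            rcases Finset.mem_insert.1 this with h0 | h0
            · simp [h0]
            · rcases Finset.mem_union.1 h0 with h1 | h1
              · exact Finset.mem_insert_of_mem h1
              · have := Finset.mem_Icc.1 h1; omega
          · have hend := ha (Finset.mem_Icc.2 ⟨Nat.le_add_right a p, le_rfl⟩)
            rcases Finset.mem_insert.1 hend with h0 | h0
            · omega
            · rcases Finset.mem_union.1 h0 with h1 | h1
              · have := hJsmall _ h1; omega
              · have := Finset.mem_Icc.1 h1; omega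
        · intro i hi1 hi2
          exact Finset.mem_union_right _ (Finset.mem_Icc.2 ⟨by omega, by omega⟩)
      · -- left inverse
        intro I hI
        rw [hfib] at hI
        obtain ⟨h1, h2, h3, h4⟩ := hI
        ext x
        simp only [Finset.mem_union, Finset.mem_filter, Finset.mem_Icc]
        constructor
        · rintro (⟨hx, _⟩ | ⟨hx1, hx2⟩)
          · exact hx
          · exact h4 x (by omega) (by omega)
        · intro hx
          have hxI := Finset.mem_Icc.1 (h1 hx)
          have hxne : x ≠ n - k := fun h => h3 (h ▸ hx)
          rcases Nat.lt_or_ge x (n - k) with h | h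
          · exact Or.inl ⟨hx, h⟩
          · exact Or.inr ⟨by omega, by omega⟩
      · -- right inverse
        intro J hJ
        rw [Finset.mem_filter, Finset.mem_powerset] at hJ
        obtain ⟨hJ1, _⟩ := hJ
        ext x
        simp only [Finset.mem_filter, Finset.mem_union, Finset.mem_Icc]
        constructor
        · rintro ⟨hx | hx, hlt⟩
          · exact hx
          · omega
        · intro hx
          have := Finset.mem_Icc.1 (hJ1 hx)
          exact ⟨Or.inl hx, by omega⟩

end ExtPeaks
end

section
/- Let n, p ≥ 1 be integers with n ≥ p+1, let i be an integer with 0 ≤ i ≤ n-1-p, and let J ⊆ [n-1] be a subset satisfying {i+1, …, i+p+1} ∩ J = ∅ and i ∈ J ∪ {0}. Then Σ_{I ⊆ {i+1,…,i+p}} (-1)^{|I|} L^{(ρ_p)}_{n, I ∪ J} = 0 in ℂ[[x_1,x_2,…]]. -/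
open Finset
open scoped Classical

namespace ExtPeaks

/-!
Fix a weakly increasing sequence `f` and compare coefficients. Since `J` avoids
`{i+1, …, i+p+1}` and `i ∈ J ∪ {0}`, the peaks of `I ∪ J` are those of `J` together with the
`j ∈ I` with `j ≥ i + 2` and `j - 1 ∉ I`, and the plateaus split in the same way; so the
contribution of `f` factors as a `J`-part times `Σ_{I ⊆ {i+1,…,i+p}} (-1)^{|I|} w(I)`.
If `f` rises strictly at some `m` of the window, adding or removing `m` does not change `w(I)`,
and the sum cancels in pairs. Otherwise `f` is constant on the window, only the initial segments
`{i+1, …, i+r}` satisfy the peak condition, and the sum is `Σ_{r ≤ p} (-ρ_p)^r = 0` because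
`-ρ_p = exp(2πi/(p+1))` is a primitive `(p+1)`-th root of unity.
-/

theorem neg_rho_eq_exp (p : ℕ) :
    -rho p = Complex.exp (2 * Real.pi * Complex.I / ((p + 1 : ℕ) : ℂ)) := by
  have hp : ((p : ℂ) + 1) ≠ 0 := by exact_mod_cast p.succ_ne_zero
  rw [rho, ← neg_one_mul, ← Complex.exp_pi_mul_I, ← Complex.exp_add]
  congr 1
  push_cast
  field_simp
  ring

theorem geom_sum_neg_rho_eq_zero {p : ℕ} (hp : 1 ≤ p) :
    ∑ k ∈ range (p + 1), (-rho p) ^ k = 0 := by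
  rw [neg_rho_eq_exp]
  exact (Complex.isPrimitiveRoot_exp (p + 1) p.succ_ne_zero).geom_sum_eq_zero (by omega)

/-- The weight `q^{#plateaus in I}` of `f` in `L^{(q)}_{n,I}`, with the peak condition taken over
`P` and without the factor `(q + 1)^{#values}`. -/
noncomputable def peakWeight (q : ℂ) (f : ℕ → ℕ) (P I : Finset ℕ) : ℂ :=
  if ∀ j ∈ P, f (j - 1) < f (j + 1) then q ^ #(I.filter fun j => f j = f (j + 1)) else 0

theorem peakWeight_union {q : ℂ} {f : ℕ → ℕ} {P P' I I' : Finset ℕ} (h : Disjoint I I') :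
    peakWeight q f (P ∪ P') (I ∪ I') = peakWeight q f P I * peakWeight q f P' I' := by
  simp only [peakWeight, filter_union, card_union_of_disjoint (disjoint_filter_filter h),
    pow_add, mem_union, or_imp, forall_and]
  split_ifs <;> simp_all

def windowPeaks (i : ℕ) (I : Finset ℕ) : Finset ℕ :=
  I.filter fun j => i + 2 ≤ j ∧ j - 1 ∉ I

theorem peakOf_union_eq {p i : ℕ} {I J : Finset ℕ} (hI : I ⊆ Icc (i + 1) (i + p))
    (hJ : Disjoint (Icc (i + 1) (i + p + 1)) J) (hiJ : i ∈ J ∨ i = 0) :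
    peakOf (I ∪ J) = windowPeaks i I ∪ peakOf J := by
  have hIJ : ∀ j ∈ I, j - 1 ∈ J → j = i + 1 := fun j hj hj' => by
    have := mem_Icc.1 (hI hj)
    by_contra
    exact disjoint_right.1 hJ hj' (mem_Icc.2 ⟨by omega, by omega⟩)
  have hJI : ∀ j ∈ J, j - 1 ∉ I := fun j hj hj' => by
    have := mem_Icc.1 (hI hj')
    exact disjoint_right.1 hJ hj (mem_Icc.2 ⟨by omega, by omega⟩)
  ext j
  simp only [peakOf, windowPeaks, mem_filter, mem_union, not_or]
  constructor
  · rintro ⟨hj | hj, hj2, hjI, hjJ⟩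
    · refine Or.inl ⟨hj, ?_, hjI⟩
      have := mem_Icc.1 (hI hj)
      rcases hiJ with hiJ | rfl
      · by_contra
        exact hjJ (by rwa [show j - 1 = i by omega])
      · omega
    · exact Or.inr ⟨hj, hj2, hjJ⟩
  · rintro (⟨hj, hj2, hjI⟩ | ⟨hj, hj2, hjJ⟩)
    · exact ⟨Or.inl hj, by omega, hjI, fun h => by have := hIJ j hj h; omega⟩
    · exact ⟨Or.inr hj, hj2, hJI j hj, hjJ⟩

theorem Icc_subset_of_windowPeaks_eq_empty {i : ℕ} {I : Finset ℕ} (h : windowPeaks i I = ∅) :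
    ∀ {j}, j ∈ I → Icc (i + 1) j ⊆ I := by
  intro j
  induction j with
  | zero => intro _ k hk; have := mem_Icc.1 hk; omega
  | succ j ih =>
    intro hj k hk
    have hk := mem_Icc.1 hk
    rcases hk.2.eq_or_lt with rfl | hlt
    · exact hj
    · have hjI : j ∈ I := by
        by_contra hjI
        have : j + 1 ∈ windowPeaks i I := mem_filter.2 ⟨hj, by omega, by simpa⟩
        simp [h] at this
      exact ih hjI (mem_Icc.2 ⟨hk.1, by omega⟩)

theorem powerset_filter_windowPeaks_eq_empty (p i : ℕ) :
    (Icc (i + 1) (i + p)).powerset.filter (fun I => windowPeaks i I = ∅) =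
      (range (p + 1)).image fun r => Icc (i + 1) (i + r) := by
  ext I
  simp only [mem_filter, mem_powerset, mem_image, mem_range]
  constructor
  · rintro ⟨hI, h⟩
    rcases I.eq_empty_or_nonempty with rfl | hne
    · exact ⟨0, by omega, Icc_eq_empty (by omega)⟩
    · have hM := mem_Icc.1 (hI (I.max'_mem hne))
      refine ⟨I.max' hne - i, by omega, ?_⟩
      rw [Nat.add_sub_cancel' (by omega)]
      exact Subset.antisymm (Icc_subset_of_windowPeaks_eq_empty h (I.max'_mem hne))
        fun k hk => mem_Icc.2 ⟨(mem_Icc.1 (hI hk)).1, I.le_max' k hk⟩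
  · rintro ⟨r, hr, rfl⟩
    refine ⟨Icc_subset_Icc le_rfl (by omega), filter_eq_empty_iff.2 fun j hj => ?_⟩
    simp only [mem_Icc] at hj ⊢
    omega

section Window

variable {p i : ℕ} {q : ℂ} {f : ℕ → ℕ}

theorem peakWeight_windowPeaks_insert (hf : ∀ k ∈ Icc (i + 1) (i + p), f k ≤ f (k + 1))
    {m : ℕ} (hm : m ∈ Icc (i + 1) (i + p)) (hrise : f m < f (m + 1))
    {I : Finset ℕ} (hI : I ⊆ Icc (i + 1) (i + p)) (hmI : m ∉ I) :
    peakWeight q f (windowPeaks i (insert m I)) (insert m I) =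
      peakWeight q f (windowPeaks i I) I := by
  have hm' := mem_Icc.1 hm
  have peak_m : i + 2 ≤ m → f (m - 1) < f (m + 1) := fun h =>
    (hf (m - 1) (mem_Icc.2 ⟨by omega, by omega⟩)).trans_lt
      (by rwa [Nat.sub_add_cancel (by omega)])
  have peak_succ_m : m + 1 ∈ I → f m < f (m + 1 + 1) := fun h =>
    hrise.trans_le (hf (m + 1) (hI h))
  have hcond : (∀ j ∈ windowPeaks i (insert m I), f (j - 1) < f (j + 1)) ↔
      ∀ j ∈ windowPeaks i I, f (j - 1) < f (j + 1) := by
    simp only [windowPeaks, mem_filter, mem_insert, not_or, and_imp]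
    constructor
    · intro h j hj hj2 hj1
      by_cases hjm : j - 1 = m
      · rw [hjm, show j = m + 1 by omega]
        exact peak_succ_m (by rwa [show m + 1 = j by omega])
      · exact h j (Or.inr hj) hj2 hjm hj1
    · rintro h j (rfl | hj) hj2 - hj1
      · exact peak_m hj2
      · exact h j hj hj2 hj1
  simp only [peakWeight, filter_insert, if_neg hrise.ne, if_congr hcond rfl rfl]

theorem sum_windowPeakWeight_eq_zero_of_lt (hf : ∀ k ∈ Icc (i + 1) (i + p), f k ≤ f (k + 1))
    {m : ℕ} (hm : m ∈ Icc (i + 1) (i + p)) (hrise : f m < f (m + 1)) :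
    ∑ I ∈ (Icc (i + 1) (i + p)).powerset,
      (-1 : ℂ) ^ #I * peakWeight q f (windowPeaks i I) I = 0 := by
  rw [← insert_erase hm, sum_powerset_insert (notMem_erase m _), ← sum_add_distrib]
  refine sum_eq_zero fun I hI => ?_
  have hmI : m ∉ I := fun h => notMem_erase m _ (mem_powerset.1 hI h)
  have hI' : I ⊆ Icc (i + 1) (i + p) := (mem_powerset.1 hI).trans (erase_subset m _)
  rw [card_insert_of_notMem hmI, peakWeight_windowPeaks_insert hf hm hrise hI' hmI, pow_succ]
  ring

theorem sum_windowPeakWeight_eq_geom_sum (hflat : ∀ k ∈ Icc (i + 1) (i + p), f k = f (k + 1)) :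
    ∑ I ∈ (Icc (i + 1) (i + p)).powerset,
      (-1 : ℂ) ^ #I * peakWeight q f (windowPeaks i I) I = ∑ r ∈ range (p + 1), (-q) ^ r := by
  have hterm : ∀ I ∈ (Icc (i + 1) (i + p)).powerset,
      (-1 : ℂ) ^ #I * peakWeight q f (windowPeaks i I) I =
        if windowPeaks i I = ∅ then (-q) ^ #I else 0 := by
    intro I hI
    have hI := mem_powerset.1 hI
    have hcond : (∀ j ∈ windowPeaks i I, f (j - 1) < f (j + 1)) ↔ windowPeaks i I = ∅ := by
      refine ⟨fun h => eq_empty_of_forall_notMem fun j hj => ?_, fun h => by simp [h]⟩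
      obtain ⟨hjI, hj2, -⟩ := mem_filter.1 hj
      have := mem_Icc.1 (hI hjI)
      have hprev := hflat (j - 1) (mem_Icc.2 ⟨by omega, by omega⟩)
      rw [Nat.sub_add_cancel (by omega)] at hprev
      exact (h j hj).ne (hprev.trans (hflat j (hI hjI)))
    rw [peakWeight, if_congr hcond rfl rfl, filter_true_of_mem fun j hj => hflat j (hI hj)]
    split_ifs
    · exact (neg_pow q #I).symm
    · rw [mul_zero]
  have hinj : Set.InjOn (fun r => Icc (i + 1) (i + r)) (range (p + 1)) := fun r _ s _ h => by
    simpa using congrArg card h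
  rw [sum_congr rfl hterm, ← sum_filter, powerset_filter_windowPeaks_eq_empty, sum_image hinj]
  exact sum_congr rfl fun r _ => by simp

theorem sum_windowPeakWeight_eq_zero (hq : ∑ k ∈ range (p + 1), (-q) ^ k = 0)
    (hf : ∀ k ∈ Icc (i + 1) (i + p), f k ≤ f (k + 1)) :
    ∑ I ∈ (Icc (i + 1) (i + p)).powerset,
      (-1 : ℂ) ^ #I * peakWeight q f (windowPeaks i I) I = 0 := by
  by_cases hflat : ∀ k ∈ Icc (i + 1) (i + p), f k = f (k + 1)
  · rw [sum_windowPeakWeight_eq_geom_sum hflat, hq]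
  · push Not at hflat
    obtain ⟨m, hm, hne⟩ := hflat
    exact sum_windowPeakWeight_eq_zero_of_lt hf hm ((hf m hm).lt_of_ne hne)

theorem sum_peakWeight_union_eq_zero (hq : ∑ k ∈ range (p + 1), (-q) ^ k = 0)
    (hf : ∀ k ∈ Icc (i + 1) (i + p), f k ≤ f (k + 1)) {J : Finset ℕ}
    (hJ : Disjoint (Icc (i + 1) (i + p + 1)) J) (hiJ : i ∈ J ∨ i = 0) :
    ∑ I ∈ (Icc (i + 1) (i + p)).powerset,
      (-1 : ℂ) ^ #I * peakWeight q f (peakOf (I ∪ J)) (I ∪ J) = 0 := by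
  have hsplit : ∀ I ∈ (Icc (i + 1) (i + p)).powerset,
      (-1 : ℂ) ^ #I * peakWeight q f (peakOf (I ∪ J)) (I ∪ J) =
        ((-1 : ℂ) ^ #I * peakWeight q f (windowPeaks i I) I) * peakWeight q f (peakOf J) J := by
    intro I hI
    have hI := mem_powerset.1 hI
    have hIJ : Disjoint I J :=
      disjoint_of_subset_left (hI.trans (Icc_subset_Icc le_rfl (by omega))) hJ
    rw [peakOf_union_eq hI hJ hiJ, peakWeight_union hIJ, mul_assoc]
  rw [sum_congr rfl hsplit, ← sum_mul, sum_windowPeakWeight_eq_zero hq hf, zero_mul]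

end Window

noncomputable def incSeqs (n : ℕ) (d : ℕ →₀ ℕ) : Finset (Fin n → ℕ) :=
  (Fintype.piFinset fun _ => d.support).filter fun g =>
    (∀ j k : Fin n, j ≤ k → g j ≤ g k) ∧ (∀ j, 1 ≤ g j) ∧ monomialOf g = d

theorem Lseqs_eq_filter (n : ℕ) (I : Finset ℕ) (d : ℕ →₀ ℕ) :
    Lseqs n I d =
      (incSeqs n d).filter fun g => ∀ j ∈ peakOf I, fget g (j - 1) < fget g (j + 1) := by
  ext g
  simp only [Lseqs, incSeqs, mem_filter]
  tauto

theorem coeff_Lq (q : ℂ) (n : ℕ) (I : Finset ℕ) (d : ℕ →₀ ℕ) :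
    MvPowerSeries.coeff d (Lq q n I) =
      ∑ g ∈ incSeqs n d, peakWeight q (fget g) (peakOf I) I * (q + 1) ^ #(image g univ) := by
  change ∑ g ∈ Lseqs n I d, _ = _
  rw [Lseqs_eq_filter, sum_filter]
  refine sum_congr rfl fun g _ => ?_
  rw [peakWeight]
  split_ifs <;> simp

theorem fget_le_fget_succ {n : ℕ} {g : Fin n → ℕ}
    (hg : ∀ j k : Fin n, j ≤ k → g j ≤ g k) {k : ℕ} (hk : 1 ≤ k) (hkn : k + 1 ≤ n) : fget g k ≤ fget g (k + 1) := by
  rw [fget, fget, dif_pos (by omega), dif_pos (by omega)]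
  exact hg _ _ (Fin.mk_le_mk.2 (by omega))

theorem alternating_sum_extended_peak_vanishes_general (n p : ℕ) (hp : 1 ≤ p) (hn : p + 1 ≤ n)
    (i : ℕ) (hi : i ≤ n - 1 - p) (J : Finset ℕ)
    (hJdisj : Disjoint (Finset.Icc (i + 1) (i + p + 1)) J)
    (hiJ : i ∈ J ∨ i = 0) :
    ∑ I ∈ (Finset.Icc (i + 1) (i + p)).powerset,
      ((-1 : ℂ) ^ I.card) • Lq (rho p) n (I ∪ J) = 0 := by
  ext d
  simp only [map_sum, map_smul, map_zero, smul_eq_mul, coeff_Lq, mul_sum]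
  rw [sum_comm]
  refine sum_eq_zero fun g hg => ?_
  have hmono : ∀ k ∈ Icc (i + 1) (i + p), fget g k ≤ fget g (k + 1) := fun k hk => by
    have := mem_Icc.1 hk
    exact fget_le_fget_succ (mem_filter.1 hg).2.1 (by omega) (by omega)
  simp only [← mul_assoc, ← sum_mul]
  rw [sum_peakWeight_union_eq_zero (geom_sum_neg_rho_eq_zero hp) hmono hJdisj hiJ, zero_mul]

/-- For `n ≥ p + 1`, `0 ≤ i ≤ n - 1 - p` and `J ⊆ [n-1]` with
`{i+1, …, i+p+1} ∩ J = ∅` and `i ∈ J ∪ {0}`, one has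
`Σ_{I ⊆ {i+1,…,i+p}} (-1)^{|I|} L^{(ρ_p)}_{n, I ∪ J} = 0`. -/
theorem alternating_sum_extended_peak_vanishes (n p : ℕ) (hp : 1 ≤ p) (hn : p + 1 ≤ n)
    (i : ℕ) (hi : i ≤ n - 1 - p) (J : Finset ℕ) (hJ : J ⊆ Finset.Icc 1 (n - 1))
    (hJdisj : Disjoint (Finset.Icc (i + 1) (i + p + 1)) J)
    (hiJ : i ∈ J ∨ i = 0) :
    ∑ I ∈ (Finset.Icc (i + 1) (i + p)).powerset,
      ((-1 : ℂ) ^ I.card) • Lq (rho p) n (I ∪ J) = 0 :=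
  alternating_sum_extended_peak_vanishes_general n p hp hn i hi J hJdisj hiJ

end ExtPeaks
end

section
/- Let R be a commutative ring, let x, y ∈ R, and let n ≥ 0 be an integer. Then Σ_{k=0}^{n} (−1)^k · C(n−k, k) · (xy)^k · (x+y)^{n−2k} = Σ_{j=0}^{n} x^{n−j} y^j, where C(a, b) denotes the binomial coefficient (which vanishes when b > a, so only terms with 2k ≤ n contribute). -/
open Finset
open scoped Classical

namespace ExtPeaks

lemma Trec {R : Type*} [CommRing R] (x y : R) (n : ℕ) :
    ∑ j ∈ Finset.range (n + 3), x ^ (n + 2 - j) * y ^ j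
      = (x + y) * (∑ j ∈ Finset.range (n + 2), x ^ (n + 1 - j) * y ^ j)
        - x * y * ∑ j ∈ Finset.range (n + 1), x ^ (n - j) * y ^ j := by
  have h1 : x * ∑ j ∈ Finset.range (n + 2), x ^ (n + 1 - j) * y ^ j
      = ∑ j ∈ Finset.range (n + 2), x ^ (n + 2 - j) * y ^ j := by
    rw [Finset.mul_sum]
    refine Finset.sum_congr rfl fun j hj => ?_
    rw [Finset.mem_range] at hj
    have h : n + 2 - j = (n + 1 - j) + 1 := by omega
    rw [h, pow_succ]; ring
  have h2 : ∑ j ∈ Finset.range (n + 1), x ^ (n + 1 - j) * y ^ j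
      = x * ∑ j ∈ Finset.range (n + 1), x ^ (n - j) * y ^ j := by
    rw [Finset.mul_sum]
    refine Finset.sum_congr rfl fun j hj => ?_
    rw [Finset.mem_range] at hj
    have h : n + 1 - j = (n - j) + 1 := by omega
    rw [h, pow_succ]; ring
  rw [Finset.sum_range_succ (n := n + 2), ← h1, add_mul,
    Finset.sum_range_succ (n := n + 1), h2]
  simp [Nat.sub_self]
  ring

lemma Lrec {R : Type*} [CommRing R] (x y : R) (n : ℕ) :
    ∑ k ∈ Finset.range (n + 3),
        (-1 : R) ^ k * ((n + 2 - k).choose k : R) * (x * y) ^ k * (x + y) ^ (n + 2 - 2 * k)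
      = (x + y) * (∑ k ∈ Finset.range (n + 2),
          (-1 : R) ^ k * ((n + 1 - k).choose k : R) * (x * y) ^ k * (x + y) ^ (n + 1 - 2 * k))
        - x * y * ∑ k ∈ Finset.range (n + 1),
            (-1 : R) ^ k * ((n - k).choose k : R) * (x * y) ^ k * (x + y) ^ (n - 2 * k) := by
  conv_lhs => rw [Finset.sum_range_succ' _ (n + 2)]
  conv_rhs => rw [Finset.sum_range_succ' _ (n + 1)]
  have hsplit : ∀ k ∈ Finset.range (n + 2),
      (-1 : R) ^ (k + 1) * ((n + 2 - (k + 1)).choose (k + 1) : R) * (x * y) ^ (k + 1)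
          * (x + y) ^ (n + 2 - 2 * (k + 1))
        = ((-1 : R) ^ (k + 1) * ((n - k).choose (k + 1) : R) * (x * y) ^ (k + 1)
              * (x + y) ^ (n - 2 * k))
          + ((-1 : R) ^ (k + 1) * ((n - k).choose k : R) * (x * y) ^ (k + 1)
              * (x + y) ^ (n - 2 * k)) := by
    intro k hk
    rw [Finset.mem_range] at hk
    have he : n + 2 - 2 * (k + 1) = n - 2 * k := by omega
    rw [he]
    by_cases h : k ≤ n
    · have h1 : n + 2 - (k + 1) = (n - k) + 1 := by omega
      rw [h1, Nat.choose_succ_succ]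
      push_cast; ring
    · have hk' : k = n + 1 := by omega
      subst hk'
      have h1 : n + 2 - (n + 1 + 1) = 0 := by omega
      have h2 : n - (n + 1) = 0 := by omega
      rw [h1, h2]
      simp [Nat.choose_eq_zero_of_lt]
  rw [Finset.sum_congr rfl hsplit, Finset.sum_add_distrib]
  have hB : ∑ k ∈ Finset.range (n + 2),
      (-1 : R) ^ (k + 1) * ((n - k).choose k : R) * (x * y) ^ (k + 1) * (x + y) ^ (n - 2 * k)
      = -(x * y) * ∑ k ∈ Finset.range (n + 1),
          (-1 : R) ^ k * ((n - k).choose k : R) * (x * y) ^ k * (x + y) ^ (n - 2 * k) := by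
    rw [Finset.sum_range_succ]
    have h0 : n - (n + 1) = 0 := by omega
    rw [h0]
    simp only [Nat.choose_zero_succ, Nat.cast_zero, mul_zero, zero_mul, add_zero]
    rw [Finset.mul_sum]
    refine Finset.sum_congr rfl fun k hk => ?_
    ring
  have hA : ∑ k ∈ Finset.range (n + 2),
      (-1 : R) ^ (k + 1) * ((n - k).choose (k + 1) : R) * (x * y) ^ (k + 1) * (x + y) ^ (n - 2 * k)
      = (x + y) * ∑ k ∈ Finset.range (n + 1),
          (-1 : R) ^ (k + 1) * ((n + 1 - (k + 1)).choose (k + 1) : R) * (x * y) ^ (k + 1)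
            * (x + y) ^ (n + 1 - 2 * (k + 1)) := by
    rw [Finset.sum_range_succ]
    have h0 : n - (n + 1) = 0 := by omega
    rw [h0]
    simp only [Nat.choose_zero_succ, Nat.cast_zero, mul_zero, zero_mul, add_zero]
    rw [Finset.mul_sum]
    refine Finset.sum_congr rfl fun k hk => ?_
    rw [Finset.mem_range] at hk
    have h1 : n + 1 - (k + 1) = n - k := by omega
    rw [h1]
    by_cases h : 2 * k + 1 ≤ n
    · have h2 : n - 2 * k = (n + 1 - 2 * (k + 1)) + 1 := by omega
      rw [h2, pow_succ]; ring
    · have hc : (n - k).choose (k + 1) = 0 := Nat.choose_eq_zero_of_lt (by omega)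
      rw [hc]; simp
  rw [hA, hB]
  simp only [pow_zero, one_mul, mul_one, Nat.choose_zero_right, Nat.cast_one,
    Nat.sub_zero, Nat.mul_zero, mul_zero]
  ring

/-- For `x, y` in a commutative ring and `n ≥ 0`:
`Σ_{k=0}^n (-1)^k C(n-k, k) (xy)^k (x+y)^{n-2k} = Σ_{j=0}^n x^{n-j} y^j`. -/
theorem alternating_binomial_identity {R : Type*} [CommRing R] (x y : R) (n : ℕ) :
    ∑ k ∈ Finset.range (n + 1),
        (-1 : R) ^ k * (Nat.choose (n - k) k : R) * (x * y) ^ k * (x + y) ^ (n - 2 * k) =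
      ∑ j ∈ Finset.range (n + 1), x ^ (n - j) * y ^ j := by
  induction n using Nat.twoStepInduction with
  | zero => simp
  | one => simp [Finset.sum_range_succ]
  | more n ih1 ih2 =>
    have hL := Lrec x y n
    have hT := Trec x y n
    calc ∑ k ∈ Finset.range (n + 2 + 1),
        (-1 : R) ^ k * (Nat.choose (n + 2 - k) k : R) * (x * y) ^ k * (x + y) ^ (n + 2 - 2 * k)
        = ∑ k ∈ Finset.range (n + 3),
            (-1 : R) ^ k * ((n + 2 - k).choose k : R) * (x * y) ^ k * (x + y) ^ (n + 2 - 2 * k) := rfl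
      _ = (x + y) * (∑ k ∈ Finset.range (n + 2),
            (-1 : R) ^ k * ((n + 1 - k).choose k : R) * (x * y) ^ k * (x + y) ^ (n + 1 - 2 * k))
          - x * y * ∑ k ∈ Finset.range (n + 1),
              (-1 : R) ^ k * ((n - k).choose k : R) * (x * y) ^ k * (x + y) ^ (n - 2 * k) := hL
      _ = (x + y) * (∑ j ∈ Finset.range (n + 2), x ^ (n + 1 - j) * y ^ j)
          - x * y * ∑ j ∈ Finset.range (n + 1), x ^ (n - j) * y ^ j := by rw [ih2, ih1]
      _ = ∑ j ∈ Finset.range (n + 3), x ^ (n + 2 - j) * y ^ j := hT.symm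
      _ = ∑ j ∈ Finset.range (n + 2 + 1), x ^ (n + 2 - j) * y ^ j := rfl


end ExtPeaks
end

section
/- Let q ∈ ℂ. (i) For every n ≥ 2 and all subsets I, J ⊆ [n−2]: B_n^{(q)}(J, I) = B_{n−1}^{(q)}(J, I), B_n^{(q)}(J, I ∪ {n−1}) = B_{n−1}^{(q)}(J, I), and B_n^{(q)}(J ∪ {n−1}, I) = 0. (ii) For every n ≥ 3 and all subsets I', J' ⊆ [n−3]: A_n^{(q)}(J', I') = (q−1)·B_{n−2}^{(q)}(J', I'), A_n^{(q)}(J', I' ∪ {n−2}) = (q−1)·B_{n−2}^{(q)}(J', I'), A_n^{(q)}(J' ∪ {n−2}, I') = −q·B_{n−2}^{(q)}(J', I'), and A_n^{(q)}(J' ∪ {n−2}, I' ∪ {n−2}) = (q−1)·A_{n−1}^{(q)}(J', I'). -/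
open Finset
open scoped Classical

namespace ExtPeaks

lemma peak_subset (C : Finset ℕ) : peakOf C ⊆ C := filter_subset _ _

lemma mem_peak_insert {m : ℕ} {C : Finset ℕ} (hC : ∀ x ∈ C, x < m) {k : ℕ} :
    k ∈ peakOf (insert m C) ↔ k ∈ peakOf C ∨ (k = m ∧ 2 ≤ m ∧ m - 1 ∉ C) := by
  simp only [peakOf, mem_filter, mem_insert]
  constructor
  · rintro ⟨hk | hk, h2, h3⟩
    · subst hk
      exact Or.inr ⟨rfl, h2, fun h => h3 (Or.inr h)⟩
    · exact Or.inl ⟨hk, h2, fun h => h3 (Or.inr h)⟩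
  · rintro (⟨hk, h2, h3⟩ | ⟨rfl, h2, h3⟩)
    · have := hC k hk
      exact ⟨Or.inr hk, h2, fun h => h.elim (fun h => by omega) h3⟩
    · exact ⟨Or.inl rfl, h2, fun h => h.elim (fun h => by omega) h3⟩

lemma peak_insert_subset {m : ℕ} {C : Finset ℕ} (hC : ∀ x ∈ C, x < m) :
    peakOf C ⊆ peakOf (insert m C) :=
  fun k hk => (mem_peak_insert hC).mpr (Or.inl hk)

lemma insert_eq_insert_iff {a : ℕ} {s t : Finset ℕ} (hs : a ∉ s) (ht : a ∉ t) :
    insert a s = insert a t ↔ s = t := by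
  constructor
  · intro h
    ext x
    by_cases hx : x = a
    · subst hx; simp [hs, ht]
    · have := Finset.ext_iff.mp h x
      simp only [Finset.mem_insert, hx, false_or] at this
      exact this
  · rintro rfl; rfl

lemma BentryA {q : ℂ} {m : ℕ} {C R : Finset ℕ} (hC : ∀ x ∈ C, x < m)
    (hR : ∀ x ∈ R, x < m) :
    Bentry q R (insert m C) = Bentry q R C := by
  unfold Bentry
  rw [← Finset.sum_subset (Finset.powerset_mono.mpr (Finset.subset_insert m C)) ?_]
  · apply Finset.sum_congr rfl
    intro J' hJ'
    rw [← Finset.sum_subset (Finset.powerset_mono.mpr (peak_insert_subset hC)) ?_]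
    intro K hK hK'
    rw [if_neg]
    rintro ⟨-, hu⟩
    have hmK : m ∈ K := by
      simp only [mem_powerset] at hK hK'
      obtain ⟨x, hx, hx'⟩ := not_subset.mp hK'
      rcases (mem_peak_insert hC).mp (hK hx) with h | ⟨rfl, -⟩
      · exact absurd h hx'
      · exact hx
    have : m ∈ R := hu ▸ (mem_union_right _ hmK)
    exact absurd (hR m this) (lt_irrefl m)
  · intro J' hJ' hJ''
    apply Finset.sum_eq_zero
    intro K hK
    rw [if_neg]
    rintro ⟨-, hu⟩
    have hmJ : m ∈ J' := by
      simp only [mem_powerset] at hJ' hJ''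
      obtain ⟨x, hx, hx'⟩ := not_subset.mp hJ''
      rcases mem_insert.mp (hJ' hx) with rfl | h
      · exact hx
      · exact absurd h hx'
    have : m ∈ R := hu ▸ (mem_union_left _ (mem_union_left _ hmJ))
    exact absurd (hR m this) (lt_irrefl m)

lemma BentryB {q : ℂ} {m : ℕ} {I J : Finset ℕ} (hI : ∀ x ∈ I, x < m) :
    Bentry q (insert m J) I = 0 := by
  unfold Bentry
  apply Finset.sum_eq_zero; intro J' hJ'
  apply Finset.sum_eq_zero; intro K hK
  rw [if_neg]
  rintro ⟨-, hu⟩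
  simp only [mem_powerset] at hJ' hK
  have hm : m ∈ J' ∪ K.image (· - 1) ∪ K := hu.symm ▸ mem_insert_self m J
  simp only [mem_union, mem_image] at hm
  rcases hm with (h | ⟨k, hk, hk'⟩) | h
  · exact absurd (hI m (hJ' h)) (lt_irrefl m)
  · have := hI k (peak_subset I (hK hk)); omega
  · exact absurd (hI m (peak_subset I (hK h))) (lt_irrefl m)

lemma BentryC {q : ℂ} {m : ℕ} {C R : Finset ℕ} (hC : ∀ x ∈ C, x < m)
    (hR : ∀ x ∈ R, x < m) (hm : 1 ≤ m) (hside : m - 1 ∈ C ∨ m - 1 ∉ R) :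
    Bentry q (insert m R) (insert m C) = (q - 1) * Bentry q R C := by
  have hmC : m ∉ C := fun h => lt_irrefl m (hC m h)
  have hmR : m ∉ R := fun h => lt_irrefl m (hR m h)
  unfold Bentry
  rw [Finset.sum_powerset_insert hmC]
  have h1 : (∑ J' ∈ C.powerset, ∑ K ∈ (peakOf (insert m C)).powerset,
      if Disjoint J' K ∧ J' ∪ K.image (· - 1) ∪ K = insert m R then
        (-q) ^ K.card * (q - 1) ^ J'.card else 0) = 0 := by
    apply Finset.sum_eq_zero; intro J' hJ'
    apply Finset.sum_eq_zero; intro K hK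
    rw [if_neg]
    rintro ⟨-, hu⟩
    simp only [mem_powerset] at hJ' hK
    have hm1 : m ∈ J' ∪ K.image (· - 1) ∪ K := hu.symm ▸ mem_insert_self m R
    have hmK : m ∈ K := by
      simp only [mem_union, mem_image] at hm1
      rcases hm1 with (h | ⟨k, hk, hk'⟩) | h
      · exact absurd (hC m (hJ' h)) (lt_irrefl m)
      · rcases (mem_peak_insert hC).mp (hK hk) with h2 | ⟨rfl, -⟩
        · have := hC k (peak_subset C h2); omega
        · omega
      · exact h
    rcases (mem_peak_insert hC).mp (hK hmK) with h2 | ⟨-, h2, h3⟩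
    · exact absurd (hC m (peak_subset C h2)) (lt_irrefl m)
    have hmR1 : m - 1 ∉ R := hside.elim (fun h => absurd h h3) id
    have : m - 1 ∈ insert m R :=
      hu ▸ mem_union_left _ (mem_union_right _ (mem_image_of_mem _ hmK))
    rcases mem_insert.mp this with h | h
    · omega
    · exact hmR1 h
  rw [h1, zero_add, Finset.mul_sum]
  apply Finset.sum_congr rfl
  intro J' hJ'
  simp only [mem_powerset] at hJ'
  have hmJ' : m ∉ J' := fun h => lt_irrefl m (hC m (hJ' h))
  rw [← Finset.sum_subset (Finset.powerset_mono.mpr (peak_insert_subset hC)) ?_, Finset.mul_sum]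
  · apply Finset.sum_congr rfl
    intro K hK
    simp only [mem_powerset] at hK
    have hKC : ∀ x ∈ K, x < m := fun x hx => hC x (peak_subset C (hK hx))
    have hmK : m ∉ K := fun h => lt_irrefl m (hKC m h)
    have hmU : m ∉ J' ∪ K.image (· - 1) ∪ K := by
      intro h
      simp only [mem_union, mem_image] at h
      rcases h with (h | ⟨k, hk, hk'⟩) | h
      · exact hmJ' h
      · have := hKC k hk; omega
      · exact hmK h
    by_cases hcond : Disjoint J' K ∧ J' ∪ K.image (· - 1) ∪ K = R
    · have hc1 : Disjoint (insert m J') K ∧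
          insert m J' ∪ K.image (· - 1) ∪ K = insert m R := by
        refine ⟨Finset.disjoint_insert_left.mpr ⟨hmK, hcond.1⟩, ?_⟩
        rw [Finset.insert_union, Finset.insert_union, hcond.2]
      rw [if_pos hc1, if_pos hcond, Finset.card_insert_of_notMem hmJ']
      ring
    · have hc1 : ¬(Disjoint (insert m J') K ∧
          insert m J' ∪ K.image (· - 1) ∪ K = insert m R) := by
        rintro ⟨hd, hu⟩
        apply hcond
        rw [Finset.disjoint_insert_left] at hd
        rw [Finset.insert_union, Finset.insert_union] at hu
        exact ⟨hd.2, (insert_eq_insert_iff hmU hmR).mp hu⟩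
      rw [if_neg hc1, if_neg hcond, mul_zero]
  · intro K hK hK'
    rw [if_neg]
    rintro ⟨hd, -⟩
    simp only [mem_powerset] at hK hK'
    have hmK : m ∈ K := by
      obtain ⟨x, hx, hx'⟩ := not_subset.mp hK'
      rcases (mem_peak_insert hC).mp (hK hx) with h | ⟨rfl, -⟩
      · exact absurd h hx'
      · exact hx
    exact (Finset.disjoint_left.mp hd (mem_insert_self m J')) hmK

lemma BentryD {q : ℂ} {m : ℕ} {C R : Finset ℕ} (hC : ∀ x ∈ C, x + 1 < m)
    (hR : ∀ x ∈ R, x + 1 < m) (hm : 2 ≤ m) :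
    Bentry q (insert m (insert (m - 1) R)) (insert m C) = -q * Bentry q R C := by
  have hC' : ∀ x ∈ C, x < m := fun x hx => by have := hC x hx; omega
  have hmC : m ∉ C := fun h => lt_irrefl m (hC' m h)
  have hmP : m ∉ peakOf C := fun h => lt_irrefl m (hC' m (peak_subset C h))
  have hpeak : peakOf (insert m C) = insert m (peakOf C) := by
    ext k
    rw [mem_peak_insert hC', mem_insert]
    constructor
    · rintro (h | ⟨rfl, -, -⟩)
      · exact Or.inr h
      · exact Or.inl rfl
    · rintro (rfl | h)
      · exact Or.inr ⟨rfl, hm, fun h => by have := hC _ h; omega⟩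
      · exact Or.inl h
  unfold Bentry
  rw [hpeak, Finset.sum_powerset_insert hmC]
  have h2 : (∑ J' ∈ C.powerset, ∑ K ∈ (insert m (peakOf C)).powerset,
      if Disjoint (insert m J') K ∧
          insert m J' ∪ K.image (· - 1) ∪ K = insert m (insert (m - 1) R) then
        (-q) ^ K.card * (q - 1) ^ (insert m J').card else 0) = 0 := by
    apply Finset.sum_eq_zero; intro J' hJ'
    apply Finset.sum_eq_zero; intro K hK
    rw [if_neg]
    rintro ⟨hd, hu⟩
    simp only [mem_powerset] at hJ' hK
    have hm1 : m - 1 ∈ insert m J' ∪ K.image (· - 1) ∪ K :=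
      hu.symm ▸ mem_insert_of_mem (mem_insert_self _ _)
    simp only [mem_union, mem_image, mem_insert] at hm1
    rcases hm1 with ((h | h) | ⟨k, hk, hk'⟩) | h
    · omega
    · have := hC _ (hJ' h); omega
    · rcases mem_insert.mp (hK hk) with heq | h2
      · exact (Finset.disjoint_left.mp hd (mem_insert_self m J')) (heq ▸ hk)
      · have := hC k (peak_subset C h2); omega
    · rcases mem_insert.mp (hK h) with h2 | h2
      · omega
      · have := hC _ (peak_subset C h2); omega
  rw [h2, add_zero, Finset.mul_sum]
  apply Finset.sum_congr rfl
  intro J' hJ'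
  simp only [mem_powerset] at hJ'
  have hmJ' : m ∉ J' := fun h => lt_irrefl m (hC' m (hJ' h))
  rw [Finset.sum_powerset_insert hmP]
  have hz : (∑ K ∈ (peakOf C).powerset,
      if Disjoint J' K ∧
          J' ∪ K.image (· - 1) ∪ K = insert m (insert (m - 1) R) then
        (-q) ^ K.card * (q - 1) ^ J'.card else 0) = 0 := by
    apply Finset.sum_eq_zero; intro K hK
    rw [if_neg]
    rintro ⟨-, hu⟩
    simp only [mem_powerset] at hK
    have hm1 : m ∈ J' ∪ K.image (· - 1) ∪ K := hu.symm ▸ mem_insert_self _ _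
    simp only [mem_union, mem_image] at hm1
    rcases hm1 with (h | ⟨k, hk, hk'⟩) | h
    · have := hC _ (hJ' h); omega
    · have := hC k (peak_subset C (hK hk)); omega
    · have := hC _ (peak_subset C (hK h)); omega
  rw [hz, zero_add, Finset.mul_sum]
  apply Finset.sum_congr rfl
  intro K hK
  simp only [mem_powerset] at hK
  have hKC : ∀ x ∈ K, x + 1 < m := fun x hx => hC x (peak_subset C (hK hx))
  have hmK : m ∉ K := fun h => by have := hKC m h; omega
  have hcore : ∀ x ∈ J' ∪ K.image (· - 1) ∪ K, x + 1 < m := by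
    intro x hx
    simp only [mem_union, mem_image] at hx
    rcases hx with (h | ⟨k, hk, hk'⟩) | h
    · exact hC x (hJ' h)
    · have := hKC k hk; omega
    · exact hKC x h
  have hm1 : m ∉ insert (m - 1) (J' ∪ K.image (· - 1) ∪ K) := by
    intro h
    rcases mem_insert.mp h with h | h
    · omega
    · have := hcore m h; omega
  have hm2 : m ∉ insert (m - 1) R := by
    intro h
    rcases mem_insert.mp h with h | h
    · omega
    · have := hR m h; omega
  have hm3 : m - 1 ∉ J' ∪ K.image (· - 1) ∪ K := fun h => by have := hcore _ h; omega
  have hm4 : m - 1 ∉ R := fun h => by have := hR _ h; omega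
  have hun : J' ∪ (insert m K).image (· - 1) ∪ insert m K =
      insert m (insert (m - 1) (J' ∪ K.image (· - 1) ∪ K)) := by
    simp only [Finset.image_insert, Finset.union_insert, Finset.insert_union]
  by_cases hcond : Disjoint J' K ∧ J' ∪ K.image (· - 1) ∪ K = R
  · have hc1 : Disjoint J' (insert m K) ∧
        J' ∪ (insert m K).image (· - 1) ∪ insert m K = insert m (insert (m - 1) R) := by
      refine ⟨Finset.disjoint_insert_right.mpr ⟨hmJ', hcond.1⟩, ?_⟩
      rw [hun, hcond.2]
    rw [if_pos hc1, if_pos hcond, Finset.card_insert_of_notMem hmK]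
    ring
  · have hc1 : ¬(Disjoint J' (insert m K) ∧
        J' ∪ (insert m K).image (· - 1) ∪ insert m K = insert m (insert (m - 1) R)) := by
      rintro ⟨hd, hu⟩
      apply hcond
      rw [Finset.disjoint_insert_right] at hd
      rw [hun] at hu
      exact ⟨hd.2, (insert_eq_insert_iff hm3 hm4).mp
        ((insert_eq_insert_iff hm1 hm2).mp hu)⟩
    rw [if_neg hc1, if_neg hcond, mul_zero]


/-- The block-recursive structure of the matrices `B_n^{(q)}` and
`A_n^{(q)}` (entrywise): `B_n^{(q)}(J, I)` does not depend on `n`, hence the entry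
function `Bentry` below carries no index `n`.
(i) For `n ≥ 2` and `I, J ⊆ [n-2]`: `B_n(J, I) = B_{n-1}(J, I)`,
`B_n(J, I ∪ {n-1}) = B_{n-1}(J, I)` and `B_n(J ∪ {n-1}, I) = 0`.
(ii) For `n ≥ 3` and `I', J' ⊆ [n-3]`: `A_n(J', I') = (q-1)·B_{n-2}(J', I')`,
`A_n(J', I' ∪ {n-2}) = (q-1)·B_{n-2}(J', I')`,
`A_n(J' ∪ {n-2}, I') = -q·B_{n-2}(J', I')` and
`A_n(J' ∪ {n-2}, I' ∪ {n-2}) = (q-1)·A_{n-1}(J', I')`. -/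
theorem Bmat_Amat_block_recurrence (q : ℂ) :
    (∀ n : ℕ, 2 ≤ n → ∀ I J : Finset ℕ,
      I ⊆ Finset.Icc 1 (n - 2) → J ⊆ Finset.Icc 1 (n - 2) →
        Bentry q J I = Bentry q J I ∧
        Bentry q J (insert (n - 1) I) = Bentry q J I ∧
        Bentry q (insert (n - 1) J) I = 0) ∧
    (∀ n : ℕ, 3 ≤ n → ∀ I' J' : Finset ℕ,
      I' ⊆ Finset.Icc 1 (n - 3) → J' ⊆ Finset.Icc 1 (n - 3) →
        Aentry q n J' I' = (q - 1) * Bentry q J' I' ∧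
        Aentry q n J' (insert (n - 2) I') = (q - 1) * Bentry q J' I' ∧
        Aentry q n (insert (n - 2) J') I' = -q * Bentry q J' I' ∧
        Aentry q n (insert (n - 2) J') (insert (n - 2) I') =
          (q - 1) * Aentry q (n - 1) J' I') := by
  constructor
  · intro n hn I J hI hJ
    have hIm : ∀ x ∈ I, x < n - 1 := fun x hx => by
      have := Finset.mem_Icc.mp (hI hx); omega
    have hJm : ∀ x ∈ J, x < n - 1 := fun x hx => by
      have := Finset.mem_Icc.mp (hJ hx); omega
    exact ⟨rfl, BentryA hIm hJm, BentryB hIm⟩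
  · intro n hn I' J' hI hJ
    have hIm : ∀ x ∈ I', x + 1 < n - 1 := fun x hx => by
      have := Finset.mem_Icc.mp (hI hx); omega
    have hJm : ∀ x ∈ J', x + 1 < n - 1 := fun x hx => by
      have := Finset.mem_Icc.mp (hJ hx); omega
    have hIm' : ∀ x ∈ I', x < n - 1 := fun x hx => by have := hIm x hx; omega
    have hJm' : ∀ x ∈ J', x < n - 1 := fun x hx => by have := hJm x hx; omega
    have hIi : ∀ x ∈ insert (n - 2) I', x < n - 1 := by
      intro x hx
      rcases Finset.mem_insert.mp hx with rfl | hx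
      · omega
      · exact hIm' x hx
    have hJi : ∀ x ∈ insert (n - 2) J', x < n - 1 := by
      intro x hx
      rcases Finset.mem_insert.mp hx with rfl | hx
      · omega
      · exact hJm' x hx
    have hI2 : ∀ x ∈ I', x < n - 2 := fun x hx => by have := hIm x hx; omega
    have hJ2 : ∀ x ∈ J', x < n - 2 := fun x hx => by have := hJm x hx; omega
    have hm1 : 1 ≤ n - 1 := by omega
    have hm2 : 2 ≤ n - 1 := by omega
    refine ⟨?_, ?_, ?_, ?_⟩
    · unfold Aentry
      exact BentryC hIm' hJm' hm1 (Or.inr (fun h => by have := hJm _ h; omega))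
    · unfold Aentry
      rw [BentryC hIi hJm' hm1
        (Or.inl (Finset.mem_insert.mpr (Or.inl (by omega)))),
        BentryA hI2 hJ2]
    · unfold Aentry
      rw [show n - 2 = n - 1 - 1 from by omega]
      exact BentryD hIm hJm hm2
    · unfold Aentry
      rw [show n - 1 - 1 = n - 2 from by omega]
      exact BentryC hIi hJi hm1
        (Or.inl (Finset.mem_insert.mpr (Or.inl (by omega))))

end ExtPeaks
end

section
/- Let q ∈ ℂ with q ≠ −1, and let n ≥ 1 be an integer. Then the family of power series (η^{(q)}_{n,I})_{I ⊆ [n−1]} is linearly independent over ℂ. -/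
open Finset
open scoped Classical

namespace ExtPeaks

/-! For `I ⊆ [n-1]`, let `w_I` be the weakly increasing sequence of positive integers that
increases by one at each step `j → j+1` with `j ∉ I` and stays constant for `j ∈ I`.
A weakly increasing sequence is determined by its monomial, so the coefficient of
`x^{w_I}` in `η_{n,J}` is `(q+1)^{#values of w_I}` if `J ⊆ I` and `0` otherwise. The
family `(η_{n,J})_J` is therefore unitriangular up to the nonzero scalars `(q+1)^k`
with respect to inclusion. -/

theorem linearIndependent_of_triangular {R M ι : Type*} [Ring R] [NoZeroDivisors R]
    [AddCommGroup M] [Module R M] [PartialOrder ι] (v : ι → M) (f : ι → M →ₗ[R] R)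
    (h_lower : ∀ i j, f i (v j) ≠ 0 → j ≤ i) (h_diag : ∀ i, f i (v i) ≠ 0) :
    LinearIndependent R v := by
  rw [linearIndependent_iff]
  intro l hl
  by_contra hl0
  obtain ⟨i, hi_min⟩ := l.support.exists_minimal (Finsupp.support_nonempty_iff.mpr hl0)
  have hi : l i ≠ 0 := Finsupp.mem_support_iff.mp hi_min.prop
  have h_eval : f i (Finsupp.linearCombination R v l) = l i * f i (v i) := by
    simp only [Finsupp.linearCombination_apply, Finsupp.sum, map_sum, map_smul, smul_eq_mul]
    refine Finset.sum_eq_single_of_mem i hi_min.prop fun j hj hji => ?_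
    by_cases hf : f i (v j) = 0
    · rw [hf, mul_zero]
    · exact absurd (hi_min.eq_of_le hj (h_lower i j hf)) hji
  rw [hl, map_zero] at h_eval
  exact mul_ne_zero hi (h_diag i) h_eval.symm

lemma monomialOf_eq_toFinsupp {n : ℕ} (g : Fin n → ℕ) :
    monomialOf g = Multiset.toFinsupp (Multiset.map g Finset.univ.val) := by
  ext a
  rw [monomialOf, Finset.sum_apply', Multiset.toFinsupp_apply, Multiset.count_map,
    ← Finset.filter_val, ← Finset.card_def, Finset.card_filter]
  simp [Finsupp.single_apply, eq_comm]

lemma mem_support_monomialOf {n : ℕ} (g : Fin n → ℕ) (j : Fin n) :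
    g j ∈ (monomialOf g).support := by
  rw [monomialOf_eq_toFinsupp, Finsupp.mem_support_iff, Multiset.toFinsupp_apply,
    Ne, Multiset.count_eq_zero, not_not]
  exact Multiset.mem_map_of_mem g (Finset.mem_univ_val j)

lemma eq_of_monotone_of_monomialOf_eq {n : ℕ} {g g' : Fin n → ℕ}
    (hg : Monotone g) (hg' : Monotone g') (h : monomialOf g = monomialOf g') : g = g' := by
  have h_multiset : Multiset.map g Finset.univ.val = Multiset.map g' Finset.univ.val :=
    Multiset.toFinsupp.injective (by rwa [← monomialOf_eq_toFinsupp, ← monomialOf_eq_toFinsupp])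
  have h_perm : (List.ofFn g).Perm (List.ofFn g') := by
    rw [← Multiset.coe_eq_coe]
    simpa only [Fin.univ_val_map] using h_multiset
  exact List.ofFn_injective <| h_perm.eq_of_sortedLE
    (List.sortedLE_ofFn_iff.mpr hg) (List.sortedLE_ofFn_iff.mpr hg')

/-- The value `w_I(m + 1)` (positions are `0`-indexed here, `1`-indexed in `fget`). -/
def level (I : Finset ℕ) (m : ℕ) : ℕ := #(Icc 1 m \ I) + 1

lemma level_monotone (I : Finset ℕ) : Monotone (level I) := fun _ _ h =>
  Nat.add_le_add_right (card_le_card (sdiff_subset_sdiff (Icc_subset_Icc_right h) le_rfl)) 1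

lemma level_succ (I : Finset ℕ) (m : ℕ) :
    level I (m + 1) = level I m + if m + 1 ∈ I then 0 else 1 := by
  rw [level, level, ← insert_Icc_right_eq_Icc_add_one (Nat.le_add_left 1 m)]
  split_ifs with hm
  · rw [insert_sdiff_of_mem _ hm, add_zero]
  · rw [insert_sdiff_of_notMem _ hm, card_insert_of_notMem (by simp)]

def levelSeq (n : ℕ) (I : Finset ℕ) (j : Fin n) : ℕ := level I j

lemma levelSeq_monotone (n : ℕ) (I : Finset ℕ) : Monotone (levelSeq n I) :=
  fun _ _ h => level_monotone I h

lemma fget_levelSeq_eq_iff {n : ℕ} (I : Finset ℕ) {j : ℕ} (hj : j ∈ Icc 1 (n - 1)) :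
    fget (levelSeq n I) j = fget (levelSeq n I) (j + 1) ↔ j ∈ I := by
  obtain ⟨hj1, hjn⟩ := mem_Icc.mp hj
  rw [fget, fget, dif_pos (by omega), dif_pos (by omega)]
  obtain ⟨m, rfl⟩ := Nat.exists_eq_add_of_le' hj1
  simp only [levelSeq, Nat.add_sub_cancel, level_succ]
  split_ifs with hm <;> simp [hm]

lemma etaSeqs_monomialOf_levelSeq {n : ℕ} (I J : Finset ℕ) (hJ : J ⊆ Icc 1 (n - 1)) :
    etaSeqs n J (monomialOf (levelSeq n I)) = if J ⊆ I then {levelSeq n I} else ∅ := by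
  ext g
  simp only [etaSeqs, mem_filter, Fintype.mem_piFinset]
  constructor
  · rintro ⟨-, hg_mono, -, hg_eq, hg_monomial⟩
    obtain rfl := eq_of_monotone_of_monomialOf_eq hg_mono (levelSeq_monotone n I) hg_monomial
    have hJI : J ⊆ I := fun j hj => (fget_levelSeq_eq_iff I (hJ hj)).mp (hg_eq j hj)
    simp [hJI]
  · split_ifs with hJI
    · rintro hg
      obtain rfl := mem_singleton.mp hg
      exact ⟨mem_support_monomialOf _, levelSeq_monotone n I, fun _ => Nat.le_add_left 1 _,
        fun j hj => (fget_levelSeq_eq_iff I (hJ hj)).mpr (hJI hj), rfl⟩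
    · simp

lemma coeff_etaq_levelSeq (q : ℂ) {n : ℕ} (I J : Finset ℕ) (hJ : J ⊆ Icc 1 (n - 1)) :
    MvPowerSeries.coeff (monomialOf (levelSeq n I)) (etaq q n J) =
      if J ⊆ I then (q + 1) ^ #(image (levelSeq n I) univ) else 0 := by
  rw [MvPowerSeries.coeff_apply, etaq, etaSeqs_monomialOf_levelSeq I J hJ]
  split_ifs <;> simp

theorem etaq_linearIndependent_general (q : ℂ) (hq : q ≠ -1) (n : ℕ) :
    LinearIndependent ℂ
      (fun I : {I : Finset ℕ // I ⊆ Finset.Icc 1 (n - 1)} => etaq q n I.1) := by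
  have hq1 : q + 1 ≠ 0 := fun h => hq (eq_neg_of_add_eq_zero_left h)
  refine linearIndependent_of_triangular _
    (fun I => MvPowerSeries.coeff (monomialOf (levelSeq n I.1))) (fun I J h => ?_) (fun I => ?_)
  · rw [coeff_etaq_levelSeq q I.1 J.1 J.2] at h
    exact of_not_not fun hJI => h (if_neg hJI)
  · rw [coeff_etaq_levelSeq q I.1 I.1 I.2, if_pos subset_rfl]
    exact pow_ne_zero _ hq1

/-- For `q ≠ -1`, the enriched `q`-monomial quasisymmetric functions
`(η^{(q)}_{n,I})_{I ⊆ [n-1]}` are linearly independent over `ℂ`. -/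
theorem etaq_linearIndependent (q : ℂ) (hq : q ≠ -1) (n : ℕ) (hn : 1 ≤ n) :
    LinearIndependent ℂ
      (fun I : {I : Finset ℕ // I ⊆ Finset.Icc 1 (n - 1)} => etaq q n I.1) :=
  etaq_linearIndependent_general q hq n

end ExtPeaks
end

section
/- Let q, α, β ∈ ℂ and let n ≥ 2 be an integer. Let X be a ℂ-valued vector indexed by the subsets of [n−1]; write X^1 for its restriction to subsets of [n−2], and X^2 for the vector indexed by subsets S of [n−2] defined by X^2(S) = X(S ∪ {n−1}). Then (α·A_{n+1}^{(q)} + β·B_n^{(q)})X = 0 if and only if both ((q−1)α+β)·B_{n−1}^{(q)}(X^1 + X^2) = 0 and −qα·B_{n−1}^{(q)}X^1 + ((q−1)α+β)·A_n^{(q)}X^2 = 0. -/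
open Finset
open scoped Classical

namespace ExtPeaks

/-- The matrix `A_{m+1}^{(q)}`, with rows and columns indexed by the subsets of `[m-1]`
(the index set of `A_n^{(q)}` consists of the subsets of `[n-2]`). -/
noncomputable def AmatSucc (q : ℂ) (m : ℕ) : Matrix ↥(subsetsOf m) ↥(subsetsOf m) ℂ :=
  fun J I => Aentry q (m + 1) J.1 I.1

/-!
The entry `B(J, I)` is a sum over the decompositions `J = J' ∪ (K - 1) ∪ K` with `J' ⊆ I` and
`K ⊆ Peak(I)`. Adding to `I` a letter `a + 1` with `a + 2 ∉ I` acts on these decompositions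
in a controlled way: the new letter either joins `J'`, which multiplies the entry by `q - 1`, or
becomes a new peak in `K`, which requires `a, a + 1 ∈ J` and multiplies the entry by `-q`; and a
letter of `J` isolated from `I` kills the entry. Splitting the subsets of `[n - 1]` according to
whether they contain `n - 1`, these rules applied to the letters `n - 1` and `n` turn the rows `S`
and `S ∪ {n - 1}` of `(α A_{n+1} + β B_n) X` into the rows `S` of the two vectors on the right.
-/

def decompositions (J I : Finset ℕ) : Finset (Finset ℕ × Finset ℕ) :=
  (I.powerset ×ˢ (peakOf I).powerset).filter fun p =>
    Disjoint p.1 p.2 ∧ p.1 ∪ p.2.image (· - 1) ∪ p.2 = J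

theorem Bentry_eq_sum_decompositions (q : ℂ) (J I : Finset ℕ) :
    Bentry q J I = ∑ p ∈ decompositions J I, (-q) ^ p.2.card * (q - 1) ^ p.1.card := by
  rw [decompositions, sum_filter, sum_product]
  rfl

-- Peaks are at least `2`, so `x ∈ K.image (· - 1)` can be read as `x + 1 ∈ K`.
theorem mem_decompositions {J I J' K : Finset ℕ} :
    (J', K) ∈ decompositions J I ↔ (∀ x ∈ J', x ∈ I) ∧
      (∀ k ∈ K, k ∈ I ∧ 2 ≤ k ∧ k - 1 ∉ I) ∧ (∀ x ∈ J', x ∉ K) ∧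
      ∀ x, x ∈ J ↔ x ∈ J' ∨ x + 1 ∈ K ∨ x ∈ K := by
  simp only [decompositions, mem_filter, mem_product, mem_powerset, subset_iff, peakOf,
    disjoint_left, Finset.ext_iff, mem_union, mem_image]
  grind

theorem injOn_insert {α : Type*} [DecidableEq α] (a : α) :
    Set.InjOn (insert a : Finset α → Finset α) {s | a ∉ s} := fun s hs t ht h => by
  rw [← erase_insert hs, ← erase_insert ht, h]

section Insertion

variable {a : ℕ} {J I : Finset ℕ}

theorem decompositions_insert_right (ha1I : a + 1 ∉ I) (haJ : a ∉ J) :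
    decompositions J (insert a I) = decompositions J I := by
  ext ⟨J', K⟩
  simp only [mem_decompositions, mem_insert]
  grind

theorem decompositions_eq_empty_of_mem (haI : a ∉ I) (ha1I : a + 1 ∉ I) (haJ : a ∈ J) :
    decompositions J I = ∅ := by
  ext ⟨J', K⟩
  simp only [mem_decompositions, notMem_empty, iff_false]
  grind

theorem decompositions_insert_insert (ha1I : a + 1 ∉ I) (ha2I : a + 2 ∉ I) (ha1J : a + 1 ∉ J)
    (haJI : a ∈ J → a ∈ I) :
    decompositions (insert (a + 1) J) (insert (a + 1) I) =
      (decompositions J I).image (Prod.map (insert (a + 1)) id) := by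
  ext ⟨J', K⟩
  simp only [mem_image, Prod.exists, Prod.map, id, Prod.mk.injEq, mem_decompositions,
    mem_insert]
  constructor
  · rintro ⟨h1, h2, hd, hu⟩
    refine ⟨J'.erase (a + 1), K, ⟨?_, ?_, ?_, fun x => ?_⟩, ?_, rfl⟩ <;> grind
  · rintro ⟨J'', K, ⟨h1, h2, hd, hu⟩, rfl, rfl⟩
    refine ⟨?_, ?_, ?_, fun x => ?_⟩ <;> grind

theorem decompositions_insert_peak (ha : 1 ≤ a) (haI : a ∉ I) (ha1I : a + 1 ∉ I)
    (ha2I : a + 2 ∉ I) (haJ : a ∉ J) (ha1J : a + 1 ∉ J) :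
    decompositions (insert (a + 1) (insert a J)) (insert (a + 1) I) =
      (decompositions J I).image (Prod.map id (insert (a + 1))) := by
  ext ⟨J', K⟩
  simp only [mem_image, Prod.exists, Prod.map, id, Prod.mk.injEq, mem_decompositions,
    mem_insert]
  constructor
  · rintro ⟨h1, h2, hd, hu⟩
    refine ⟨J', K.erase (a + 1), ⟨?_, ?_, ?_, fun x => ?_⟩, rfl, ?_⟩ <;> grind
  · rintro ⟨J'', K, ⟨h1, h2, hd, hu⟩, rfl, rfl⟩
    refine ⟨?_, ?_, ?_, fun x => ?_⟩ <;> grind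

variable (q : ℂ)

theorem Bentry_insert_right (ha1I : a + 1 ∉ I) (haJ : a ∉ J) :
    Bentry q J (insert a I) = Bentry q J I := by
  rw [Bentry_eq_sum_decompositions, Bentry_eq_sum_decompositions,
    decompositions_insert_right ha1I haJ]

theorem Bentry_eq_zero_of_mem (haI : a ∉ I) (ha1I : a + 1 ∉ I) (haJ : a ∈ J) :
    Bentry q J I = 0 := by
  rw [Bentry_eq_sum_decompositions, decompositions_eq_empty_of_mem haI ha1I haJ, sum_empty]

theorem Bentry_insert_insert (ha1I : a + 1 ∉ I) (ha2I : a + 2 ∉ I) (ha1J : a + 1 ∉ J)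
    (haJI : a ∈ J → a ∈ I) :
    Bentry q (insert (a + 1) J) (insert (a + 1) I) = (q - 1) * Bentry q J I := by
  have hfresh : ∀ p ∈ decompositions J I, a + 1 ∉ p.1 := fun p hp h =>
    ha1I ((mem_decompositions.mp hp).1 _ h)
  rw [Bentry_eq_sum_decompositions, Bentry_eq_sum_decompositions,
    decompositions_insert_insert ha1I ha2I ha1J haJI, mul_sum, sum_image]
  · refine sum_congr rfl fun p hp => ?_
    rw [Prod.map_fst, Prod.map_snd, id, card_insert_of_notMem (hfresh p hp)]
    ring
  · exact fun p hp p' hp' h => Prod.ext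
      (injOn_insert _ (hfresh p hp) (hfresh p' hp') (Prod.ext_iff.mp h).1)
      (Prod.ext_iff.mp h).2

theorem Bentry_insert_peak (ha : 1 ≤ a) (haI : a ∉ I) (ha1I : a + 1 ∉ I)
    (ha2I : a + 2 ∉ I) (haJ : a ∉ J) (ha1J : a + 1 ∉ J) :
    Bentry q (insert (a + 1) (insert a J)) (insert (a + 1) I) = -q * Bentry q J I := by
  have hfresh : ∀ p ∈ decompositions J I, a + 1 ∉ p.2 := fun p hp h =>
    ha1I ((mem_decompositions.mp hp).2.1 _ h).1
  rw [Bentry_eq_sum_decompositions, Bentry_eq_sum_decompositions,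
    decompositions_insert_peak ha haI ha1I ha2I haJ ha1J, mul_sum, sum_image]
  · refine sum_congr rfl fun p hp => ?_
    rw [Prod.map_fst, Prod.map_snd, id, card_insert_of_notMem (hfresh p hp)]
    ring
  · exact fun p hp p' hp' h => Prod.ext (Prod.ext_iff.mp h).1
      (injOn_insert _ (hfresh p hp) (hfresh p' hp') (Prod.ext_iff.mp h).2)

end Insertion

theorem subsetsOf_succ (n : ℕ) : subsetsOf (n + 1) = (Icc 1 n).powerset := by
  simp [subsetsOf]

theorem notMem_of_mem_subsetsOf {n x : ℕ} {S : Finset ℕ} (hS : S ∈ subsetsOf n)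
    (hx : n ≤ x) : x ∉ S := by
  rcases n with _ | n
  · simp [subsetsOf] at hS
  · rw [subsetsOf_succ, mem_powerset] at hS
    exact fun h => by have := (mem_Icc.mp (hS h)).2; omega

theorem mem_subsetsOf_succ_of_mem {n : ℕ} {S : Finset ℕ} (hS : S ∈ subsetsOf n) :
    S ∈ subsetsOf (n + 1) := by
  rcases n with _ | n
  · simp [subsetsOf] at hS
  · rw [subsetsOf_succ, mem_powerset] at hS ⊢
    exact hS.trans (Icc_subset_Icc_right (Nat.le_succ n))

theorem insert_mem_subsetsOf_succ {n : ℕ} {S : Finset ℕ} (hS : S ∈ subsetsOf n) :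
    insert n S ∈ subsetsOf (n + 1) := by
  rcases n with _ | n
  · simp [subsetsOf] at hS
  · rw [subsetsOf_succ, mem_powerset] at hS ⊢
    exact insert_subset (by simp) (hS.trans (Icc_subset_Icc_right (Nat.le_succ n)))

theorem subsetsOf_succ_eq_union {n : ℕ} (hn : n ≠ 0) :
    subsetsOf (n + 1) = subsetsOf n ∪ (subsetsOf n).image (insert n) := by
  obtain ⟨k, rfl⟩ : ∃ k, n = k + 1 := ⟨n - 1, by omega⟩
  rw [subsetsOf_succ, subsetsOf_succ, ← insert_Icc_right_eq_Icc_add_one (by omega),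
    powerset_insert]

theorem sum_subsetsOf_succ {n : ℕ} (hn : n ≠ 0) (g : Finset ℕ → ℂ) :
    ∑ S ∈ subsetsOf (n + 1), g S = ∑ S ∈ subsetsOf n, (g S + g (insert n S)) := by
  obtain ⟨k, rfl⟩ : ∃ k, n = k + 1 := ⟨n - 1, by omega⟩
  rw [subsetsOf_succ, subsetsOf_succ, ← insert_Icc_right_eq_Icc_add_one (by omega),
    sum_powerset_insert (by simp), sum_add_distrib]

theorem forall_mem_subsetsOf_succ {n : ℕ} (hn : n ≠ 0) {p : Finset ℕ → Prop} :
    (∀ S ∈ subsetsOf (n + 1), p S) ↔ ∀ S ∈ subsetsOf n, p S ∧ p (insert n S) := by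
  simp [subsetsOf_succ_eq_union hn, or_imp, forall_and]

noncomputable def extendByZero {n : ℕ} (X : ↥(subsetsOf n) → ℂ) (S : Finset ℕ) : ℂ :=
  if h : S ∈ subsetsOf n then X ⟨S, h⟩ else 0

theorem extendByZero_of_mem {n : ℕ} (X : ↥(subsetsOf n) → ℂ) {S : Finset ℕ}
    (h : S ∈ subsetsOf n) : extendByZero X S = X ⟨S, h⟩ :=
  dif_pos h

theorem extendByZero_add {n : ℕ} (X Y : ↥(subsetsOf n) → ℂ) :
    extendByZero (X + Y) = extendByZero X + extendByZero Y := by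
  ext S
  by_cases h : S ∈ subsetsOf n <;> simp [extendByZero, h]

theorem eq_zero_iff_extendByZero {n : ℕ} (X : ↥(subsetsOf n) → ℂ) :
    X = 0 ↔ ∀ S ∈ subsetsOf n, extendByZero X S = 0 := by
  refine ⟨fun h S hS => by rw [extendByZero_of_mem X hS, h, Pi.zero_apply], fun h => ?_⟩
  ext ⟨S, hS⟩
  rw [← extendByZero_of_mem X hS, h S hS, Pi.zero_apply]

theorem mulVec_apply_eq_sum {n : ℕ} (E : Finset ℕ → Finset ℕ → ℂ) (X : ↥(subsetsOf n) → ℂ)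
    (J : ↥(subsetsOf n)) :
    Matrix.mulVec (fun J I : ↥(subsetsOf n) => E J I) X J =
      ∑ I ∈ subsetsOf n, E J I * extendByZero X I := by
  simp only [Matrix.mulVec, dotProduct]
  rw [← sum_coe_sort (subsetsOf n)]
  exact sum_congr rfl fun I _ => by rw [extendByZero_of_mem X I.2]

theorem Bmat_mulVec_apply (q : ℂ) {n : ℕ} (X : ↥(subsetsOf n) → ℂ) (J : ↥(subsetsOf n)) :
    (Bmat q n).mulVec X J = ∑ I ∈ subsetsOf n, Bentry q J I * extendByZero X I :=
  mulVec_apply_eq_sum _ X J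

theorem AmatSucc_mulVec_apply (q : ℂ) {n : ℕ} (X : ↥(subsetsOf n) → ℂ) (J : ↥(subsetsOf n)) :
    (AmatSucc q n).mulVec X J =
      ∑ I ∈ subsetsOf n, Bentry q (insert n J) (insert n I) * extendByZero X I :=
  mulVec_apply_eq_sum _ X J

section Recurrence

variable (q α β : ℂ) {m : ℕ} {X : ↥(subsetsOf (m + 1)) → ℂ} {X1 X2 : ↥(subsetsOf m) → ℂ}

theorem extendByZero_mulVec_of_mem (hm : m ≠ 0)
    (hX1 : ∀ S ∈ subsetsOf m, extendByZero X1 S = extendByZero X S)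
    (hX2 : ∀ S ∈ subsetsOf m, extendByZero X2 S = extendByZero X (insert m S))
    {J : Finset ℕ} (hJ : J ∈ subsetsOf m) :
    extendByZero ((α • AmatSucc q (m + 1) + β • Bmat q (m + 1)).mulVec X) J =
      extendByZero (((q - 1) * α + β) • (Bmat q m).mulVec (X1 + X2)) J := by
  rw [extendByZero_of_mem _ (mem_subsetsOf_succ_of_mem hJ), extendByZero_of_mem _ hJ]
  simp only [Matrix.add_mulVec, Matrix.smul_mulVec, Pi.add_apply, Pi.smul_apply, smul_eq_mul,
    AmatSucc_mulVec_apply, Bmat_mulVec_apply, extendByZero_add]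
  rw [sum_subsetsOf_succ hm, sum_subsetsOf_succ hm, mul_sum, mul_sum, mul_sum,
    ← sum_add_distrib]
  refine sum_congr rfl fun I hI => ?_
  have hmJ : m ∉ J := notMem_of_mem_subsetsOf hJ le_rfl
  have hmI : insert m I ∈ subsetsOf (m + 1) := insert_mem_subsetsOf_succ hI
  rw [Bentry_insert_insert q (notMem_of_mem_subsetsOf hI (by omega))
      (notMem_of_mem_subsetsOf hI (by omega)) (notMem_of_mem_subsetsOf hJ (by omega))
      (fun h => absurd h hmJ),
    Bentry_insert_insert q (notMem_of_mem_subsetsOf hmI le_rfl)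
      (notMem_of_mem_subsetsOf hmI (by omega)) (notMem_of_mem_subsetsOf hJ (by omega))
      (fun _ => mem_insert_self m I),
    Bentry_insert_right q (notMem_of_mem_subsetsOf hI (by omega)) hmJ,
    hX1 I hI, hX2 I hI]
  ring

theorem extendByZero_mulVec_insert (hm : m ≠ 0)
    (hX1 : ∀ S ∈ subsetsOf m, extendByZero X1 S = extendByZero X S)
    (hX2 : ∀ S ∈ subsetsOf m, extendByZero X2 S = extendByZero X (insert m S))
    {J : Finset ℕ} (hJ : J ∈ subsetsOf m) :
    extendByZero ((α • AmatSucc q (m + 1) + β • Bmat q (m + 1)).mulVec X) (insert m J) =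
      extendByZero ((-(q * α)) • (Bmat q m).mulVec X1 +
        ((q - 1) * α + β) • (AmatSucc q m).mulVec X2) J := by
  rw [extendByZero_of_mem _ (insert_mem_subsetsOf_succ hJ), extendByZero_of_mem _ hJ]
  simp only [Matrix.add_mulVec, Matrix.smul_mulVec, Pi.add_apply, Pi.smul_apply, smul_eq_mul,
    AmatSucc_mulVec_apply, Bmat_mulVec_apply]
  rw [sum_subsetsOf_succ hm, sum_subsetsOf_succ hm, mul_sum, mul_sum, mul_sum, mul_sum,
    ← sum_add_distrib, ← sum_add_distrib]
  refine sum_congr rfl fun I hI => ?_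
  have hmJ : insert m J ∈ subsetsOf (m + 1) := insert_mem_subsetsOf_succ hJ
  have hmI : insert m I ∈ subsetsOf (m + 1) := insert_mem_subsetsOf_succ hI
  rw [Bentry_insert_peak q (Nat.one_le_iff_ne_zero.mpr hm)
      (notMem_of_mem_subsetsOf hI le_rfl) (notMem_of_mem_subsetsOf hI (by omega))
      (notMem_of_mem_subsetsOf hI (by omega))
      (notMem_of_mem_subsetsOf hJ le_rfl) (notMem_of_mem_subsetsOf hJ (by omega)),
    Bentry_insert_insert q (notMem_of_mem_subsetsOf hmI le_rfl)
      (notMem_of_mem_subsetsOf hmI (by omega)) (notMem_of_mem_subsetsOf hmJ le_rfl)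
      (fun _ => mem_insert_self m I),
    Bentry_eq_zero_of_mem q (notMem_of_mem_subsetsOf hI le_rfl)
      (notMem_of_mem_subsetsOf hI (by omega)) (mem_insert_self m J),
    hX1 I hI, hX2 I hI]
  ring

theorem kernel_recurrence_succ (hm : m ≠ 0)
    (hX1 : ∀ S ∈ subsetsOf m, extendByZero X1 S = extendByZero X S)
    (hX2 : ∀ S ∈ subsetsOf m, extendByZero X2 S = extendByZero X (insert m S)) :
    (α • AmatSucc q (m + 1) + β • Bmat q (m + 1)).mulVec X = 0 ↔
      (((q - 1) * α + β) • (Bmat q m).mulVec (X1 + X2) = 0 ∧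
        (-(q * α)) • (Bmat q m).mulVec X1 +
          ((q - 1) * α + β) • (AmatSucc q m).mulVec X2 = 0) := by
  rw [eq_zero_iff_extendByZero, forall_mem_subsetsOf_succ hm, eq_zero_iff_extendByZero,
    eq_zero_iff_extendByZero, ← forall₂_and]
  refine forall₂_congr fun J hJ => ?_
  rw [extendByZero_mulVec_of_mem q α β hm hX1 hX2 hJ,
    extendByZero_mulVec_insert q α β hm hX1 hX2 hJ]

end Recurrence

/-- Kernel recurrence equation: for `n ≥ 2` and a vector `X` indexed by
the subsets of `[n-1]`, with `X¹` its restriction to the subsets of `[n-2]` and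
`X²(S) = X(S ∪ {n-1})`, one has `(α·A_{n+1}^{(q)} + β·B_n^{(q)})X = 0` iff
`((q-1)α+β)·B_{n-1}^{(q)}(X¹+X²) = 0` and
`-qα·B_{n-1}^{(q)}X¹ + ((q-1)α+β)·A_n^{(q)}X² = 0`. -/
theorem kernel_recurrence_equation (q α β : ℂ) (n : ℕ) (hn : 2 ≤ n)
    (X : ↥(subsetsOf n) → ℂ) (X1 X2 : ↥(subsetsOf (n - 1)) → ℂ)
    (hX1 : ∀ (S : Finset ℕ) (hS : S ∈ subsetsOf (n - 1)) (hS' : S ∈ subsetsOf n),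
      X1 ⟨S, hS⟩ = X ⟨S, hS'⟩)
    (hX2 : ∀ (S : Finset ℕ) (hS : S ∈ subsetsOf (n - 1))
        (hS' : insert (n - 1) S ∈ subsetsOf n),
      X2 ⟨S, hS⟩ = X ⟨insert (n - 1) S, hS'⟩) :
    (α • AmatSucc q n + β • Bmat q n).mulVec X = 0 ↔
      (((q - 1) * α + β) • (Bmat q (n - 1)).mulVec (X1 + X2) = 0 ∧
        (-(q * α)) • (Bmat q (n - 1)).mulVec X1 +
            ((q - 1) * α + β) • (AmatSucc q (n - 1)).mulVec X2 = 0) := by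
  obtain ⟨m, rfl⟩ : ∃ m, n = m + 1 := ⟨n - 1, by omega⟩
  refine kernel_recurrence_succ q α β (m := m) (by omega) (fun S hS => ?_) (fun S hS => ?_)
  · rw [extendByZero_of_mem X1 hS, extendByZero_of_mem X (mem_subsetsOf_succ_of_mem hS)]
    exact hX1 S hS _
  · rw [extendByZero_of_mem X2 hS, extendByZero_of_mem X (insert_mem_subsetsOf_succ hS)]
    exact hX2 S hS _

end ExtPeaks
end
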